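/- Let (X,T) and (Y,S) be minimal systems, let Z be their maximal common equicontinuous factor with maps α : X → Z, β : Y → Z, and γ(x,y) = α(x) − β(y). Suppose there exists z₀ ∈ Z such that γ⁻¹(z₀) is a minimal set for T×S. Then the set {z ∈ Z : γ⁻¹(z) is minimal} is a dense Gδ subset of Z. -/

import Mathlib

/-! The map `γ` is invariant under `T × S`, so its fibers are closed invariant sets, and a fiber is
minimal iff it is nonempty and the orbit of each of its points comes arbitrarily close to each of its
points. The values `z` whose fiber contains a pair `(p, q)` with the orbit of `p` staying
`1 / (m + 1)`-far from `q` form a compact set, the image of a compact set of pairs; so the values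
with minimal fiber are the points of the compact set `range γ` outside countably many compact sets.
For density, `T ^ n × id` commutes with `T × S` and carries the fiber over `z₀` onto the fiber over
`z₀ + n • θ`, so every fiber over the dense orbit of `z₀` is minimal. -/

open Filter Topology Set

/-- A map between topological spaces is *semiopen* if the image of every
nonempty open set has nonempty interior. -/
def SemiOpen {X Y : Type*} [TopologicalSpace X] [TopologicalSpace Y] (f : X → Y) : Prop :=
  ∀ U : Set X, IsOpen U → U.Nonempty → (interior (f '' U)).Nonempty

/-- The `n`-th iterate (`n : ℤ`) of a homeomorphism. -/
def zIter {X : Type*} [TopologicalSpace X] (T : X ≃ₜ X) (n : ℤ) : X → X :=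
  fun x => (T.toEquiv ^ n) x

/-- The two-sided orbit of a point under a homeomorphism. -/
def zOrbit {X : Type*} [TopologicalSpace X] (T : X ≃ₜ X) (x : X) : Set X :=
  Set.range fun n : ℤ => zIter T n x

/-- A system is minimal if every orbit is dense. -/
def IsMinimalSystem {X : Type*} [TopologicalSpace X] (T : X ≃ₜ X) : Prop :=
  ∀ x : X, Dense (zOrbit T x)

/-- A minimal subset: nonempty, closed, invariant, with no proper nonempty
closed invariant subset. -/
def IsMinimalSubset {X : Type*} [TopologicalSpace X] (T : X ≃ₜ X) (M : Set X) : Prop :=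
  M.Nonempty ∧ IsClosed M ∧ T '' M = M ∧
    ∀ M' ⊆ M, M'.Nonempty → IsClosed M' → T '' M' = M' → M' = M

/-- A factor map between systems. -/
def IsFactorMap {X Y : Type*} [TopologicalSpace X] [TopologicalSpace Y]
    (T : X ≃ₜ X) (S : Y ≃ₜ Y) (f : X → Y) : Prop :=
  Continuous f ∧ Function.Surjective f ∧ ∀ x, f (T x) = S (f x)

/-- The regionally proximal relation. -/
def RP {X : Type*} [MetricSpace X] (T : X ≃ₜ X) : Set (X × X) :=
  {p | ∃ (u v : ℕ → X) (n : ℕ → ℤ),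
    Tendsto u atTop (𝓝 p.1) ∧ Tendsto v atTop (𝓝 p.2) ∧
    Tendsto (fun i => dist (zIter T (n i) (u i)) (zIter T (n i) (v i))) atTop (𝓝 0)}

/-- A joining of two systems: a closed invariant subset of the product with
full projections onto both coordinates. -/
def IsJoining {X Y : Type*} [TopologicalSpace X] [TopologicalSpace Y]
    (T : X ≃ₜ X) (S : Y ≃ₜ Y) (J : Set (X × Y)) : Prop :=
  IsClosed J ∧ (T.prodCongr S) '' J = J ∧
    Prod.fst '' J = Set.univ ∧ Prod.snd '' J = Set.univ

/-- `J` projects onto `X_eq × Y_eq`: phrased via the regionally proximal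
relation, every product of RP-cells meets `J`. -/
def FullEqProjection {X Y : Type*} [MetricSpace X] [MetricSpace Y]
    (T : X ≃ₜ X) (S : Y ≃ₜ Y) (J : Set (X × Y)) : Prop :=
  ∀ x : X, ∀ y : Y, ∃ p ∈ J, (x, p.1) ∈ RP T ∧ (y, p.2) ∈ RP S

/-- Two minimal systems are quasi-disjoint if the full product is the only
joining projecting onto the product of the maximal equicontinuous factors. -/
def QuasiDisjoint {X Y : Type*} [MetricSpace X] [MetricSpace Y]
    (T : X ≃ₜ X) (S : Y ≃ₜ Y) : Prop :=
  ∀ J : Set (X × Y), IsJoining T S J → FullEqProjection T S J → J = Set.univ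

/-- Two systems are disjoint if the full product is the only joining. -/
def DisjointSystems {X Y : Type*} [TopologicalSpace X] [TopologicalSpace Y]
    (T : X ≃ₜ X) (S : Y ≃ₜ Y) : Prop :=
  ∀ J : Set (X × Y), IsJoining T S J → J = Set.univ

/-- A system is equicontinuous (with respect to all integer iterates). -/
def EquicontinuousSystem {X : Type*} [MetricSpace X] (T : X ≃ₜ X) : Prop :=
  ∀ ε > (0 : ℝ), ∃ δ > (0 : ℝ), ∀ x₁ x₂ : X, dist x₁ x₂ < δ →
    ∀ n : ℤ, dist (zIter T n x₁) (zIter T n x₂) < ε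

/-- A pair of points is proximal. -/
def ProximalPair {X : Type*} [MetricSpace X] (T : X ≃ₜ X) (x₁ x₂ : X) : Prop :=
  ∀ ε > (0 : ℝ), ∃ n : ℤ, dist (zIter T n x₁) (zIter T n x₂) < ε

open Function

section Orbits

variable {W : Type*} [TopologicalSpace W] (P : W ≃ₜ W)

lemma zIter_eq_coe_zpow (n : ℤ) : zIter P n = ⇑(P ^ n) := by
  let toPerm : (W ≃ₜ W) →* Equiv.Perm W := ⟨⟨Homeomorph.toEquiv, rfl⟩, fun _ _ => rfl⟩
  funext x
  exact congrArg (· x) (map_zpow toPerm P n).symm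

lemma zOrbit_eq_range (x : W) : zOrbit P x = range fun n : ℤ => (P ^ n) x := by
  simp only [zOrbit, zIter_eq_coe_zpow]

lemma image_zOrbit (x : W) : P '' zOrbit P x = zOrbit P x := by
  rw [zOrbit_eq_range, ← range_comp]
  simpa [comp_def, zpow_one_add] using
    (add_left_surjective (1 : ℤ)).range_comp fun n : ℤ => (P ^ n) x

variable {P}

lemma zpow_image_of_image_eq {M : Set W} (hM : P '' M = M) (n : ℤ) : ⇑(P ^ n) '' M = M := by
  have hM' : ⇑P⁻¹ '' M = M := by
    nth_rw 1 [← hM]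
    simp [image_image]
  induction n using Int.induction_on with
  | zero => exact image_id M
  | succ n ih =>
    rw [zpow_add_one]
    change (⇑(P ^ (n : ℤ)) ∘ ⇑P) '' M = M
    rw [image_comp, hM, ih]
  | pred n ih =>
    rw [zpow_sub_one]
    change (⇑(P ^ (-(n : ℤ))) ∘ ⇑P⁻¹) '' M = M
    rw [image_comp, hM', ih]

lemma isMinimalSubset_iff_subset_closure_zOrbit {M : Set W} (hne : M.Nonempty)
    (hcl : IsClosed M) (hinv : P '' M = M) :
    IsMinimalSubset P M ↔ ∀ p ∈ M, M ⊆ closure (zOrbit P p) := by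
  have zOrbit_subset : ∀ {N : Set W}, P '' N = N → ∀ p ∈ N, zOrbit P p ⊆ N := by
    rintro N hN p hp _ ⟨n, rfl⟩
    change zIter P n p ∈ N
    rw [zIter_eq_coe_zpow, ← zpow_image_of_image_eq hN n]
    exact mem_image_of_mem _ hp
  constructor
  · rintro ⟨-, -, -, hmin⟩ p hp
    refine (hmin _ (closure_minimal (zOrbit_subset hinv p hp) hcl)
      ⟨p, subset_closure ⟨0, rfl⟩⟩ isClosed_closure ?_).ge
    rw [P.image_closure, image_zOrbit]
  · intro h
    refine ⟨hne, hcl, hinv, fun M' hsub ⟨p, hp⟩ hcl' hinv' => hsub.antisymm ?_⟩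
    exact (h p (hsub hp)).trans (closure_minimal (zOrbit_subset hinv' p hp) hcl')

lemma IsMinimalSubset.image_of_semiconj {V : Type*} [TopologicalSpace V] {Q : V ≃ₜ V}
    {M : Set W} (hM : IsMinimalSubset P M) (φ : W ≃ₜ V) (h : Semiconj φ P Q) :
    IsMinimalSubset Q (φ '' M) := by
  obtain ⟨hne, hcl, hinv, hmin⟩ := hM
  have himage : ∀ N : Set W, Q '' (φ '' N) = φ '' (P '' N) := fun N => (h.set_image N).symm
  refine ⟨hne.image φ, φ.isClosedMap M hcl, by rw [himage, hinv], ?_⟩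
  intro M' hsub hne' hcl' hinv'
  have hpre : φ ⁻¹' M' = M := by
    refine hmin _ ?_ (hne'.preimage φ.surjective) (hcl'.preimage φ.continuous) ?_
    · simpa using preimage_mono (f := φ) hsub
    · exact φ.injective.image_injective (by rw [← himage, φ.image_preimage, hinv'])
  rw [← hpre, φ.image_preimage]

end Orbits

section Fibers

variable {W Z : Type*} [TopologicalSpace W] {γ : W → Z}

lemma Homeomorph.image_preimage_of_comp_eq (φ : W ≃ₜ W) (h : γ ∘ φ = γ) (s : Set Z) :
    φ '' (γ ⁻¹' s) = γ ⁻¹' s := by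
  have h' : γ ∘ φ.symm = γ := funext fun w => by simpa using (congrFun h (φ.symm w)).symm
  rw [φ.image_eq_preimage_symm, ← preimage_comp, h']

lemma Homeomorph.image_preimage_singleton_of_apply_eq_add [AddGroup Z] (φ : W ≃ₜ W) {c : Z}
    (h : ∀ w, γ (φ w) = γ w + c) (z : Z) : φ '' (γ ⁻¹' {z}) = γ ⁻¹' {z + c} := by
  ext w
  rw [φ.image_eq_preimage_symm]
  simp only [mem_preimage, mem_singleton_iff]
  rw [← φ.apply_symm_apply w, h, φ.symm_apply_apply, add_left_inj]

end Fibers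

theorem isGδ_setOf_isMinimalSubset_preimage_singleton {W Z : Type*} [MetricSpace W]
    [CompactSpace W] [TopologicalSpace Z] [T2Space Z] [PerfectlyNormalSpace Z] (P : W ≃ₜ W)
    {γ : W → Z} (hγ : Continuous γ) (hγP : γ ∘ P = γ) :
    IsGδ {z | IsMinimalSubset P (γ ⁻¹' {z})} := by
  let far (m : ℕ) : Set (W × W) :=
    {pq | γ pq.1 = γ pq.2 ∧ ∀ n : ℤ, 1 / ((m : ℝ) + 1) ≤ dist ((P ^ n) pq.1) pq.2}
  have far_closed (m : ℕ) : IsClosed (far m) := by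
    simp only [far, ofPred_and, ofPred_forall]
    exact (isClosed_eq (hγ.comp continuous_fst) (hγ.comp continuous_snd)).inter
      (isClosed_iInter fun n => isClosed_le continuous_const
        (((P ^ n).continuous.comp continuous_fst).dist continuous_snd))
  have key : {z | IsMinimalSubset P (γ ⁻¹' {z})} =
      range γ ∩ ⋂ m, ((γ ∘ Prod.fst) '' far m)ᶜ := by
    ext z
    have hinv : P '' (γ ⁻¹' {z}) = γ ⁻¹' {z} := P.image_preimage_of_comp_eq hγP _
    have hcl : IsClosed (γ ⁻¹' {z}) := isClosed_singleton.preimage hγ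
    simp only [mem_ofPred_eq, mem_inter_iff, mem_iInter, mem_compl_iff]
    constructor
    · intro hz
      refine ⟨hz.1, ?_⟩
      rintro m ⟨⟨p, q⟩, ⟨hpq, hfar⟩, rfl⟩
      have hq := (isMinimalSubset_iff_subset_closure_zOrbit hz.1 hcl hinv).1 hz p rfl hpq.symm
      rw [zOrbit_eq_range] at hq
      obtain ⟨_, ⟨n, rfl⟩, hn⟩ := Metric.mem_closure_iff.1 hq _ (Nat.one_div_pos_of_nat (n := m))
      exact (hfar n).not_gt (by simpa [dist_comm] using hn)
    · rintro ⟨⟨w, rfl⟩, hnot⟩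
      refine (isMinimalSubset_iff_subset_closure_zOrbit (M := γ ⁻¹' {γ w}) ⟨w, rfl⟩ hcl
        hinv).2 fun p hp q hq => ?_
      rw [zOrbit_eq_range, Metric.mem_closure_iff]
      intro ε hε
      obtain ⟨m, hm⟩ := exists_nat_one_div_lt hε
      by_contra! hfar
      refine hnot m ⟨(p, q), ⟨hp.trans hq.symm, fun n => hm.le.trans ?_⟩, hp⟩
      simpa [dist_comm] using hfar _ ⟨n, rfl⟩
  rw [key]
  exact (isCompact_range hγ).isClosed.isGδ.inter <| IsGδ.iInter fun m =>
    ((far_closed m).isCompact.image (hγ.comp continuous_fst)).isClosed.isOpen_compl.isGδ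

lemma apply_zpow_apply_of_apply_eq_add {X G : Type*} [TopologicalSpace X] [AddCommGroup G]
    {T : X ≃ₜ X} {α : X → G} {θ : G} (hα : ∀ x, α (T x) = α x + θ) (n : ℤ) (x : X) :
    α ((T ^ n) x) = α x + n • θ := by
  induction n using Int.induction_on generalizing x with
  | zero => simp
  | succ n ih =>
    rw [zpow_add_one, Homeomorph.mul_apply, ih, hα, add_smul, one_smul]
    abel
  | pred n ih =>
    have hsymm : α (T.symm x) = α x - θ := by
      rw [eq_sub_iff_add_eq, ← hα, T.apply_symm_apply]
    rw [zpow_sub_one, Homeomorph.mul_apply, Homeomorph.inv_apply, ih, hsymm,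
      sub_smul, one_smul]
    abel

theorem stmt18_general {X Y Z : Type*} [MetricSpace X] [CompactSpace X]
    [MetricSpace Y] [CompactSpace Y]
    [MetricSpace Z] [AddCommGroup Z] [IsTopologicalAddGroup Z]
    (T : X ≃ₜ X) (S : Y ≃ₜ Y)
    (θ : Z) (hθ : Dense (Set.range fun n : ℤ => n • θ))
    (α : X → Z) (hαc : Continuous α)
    (hα : ∀ x, α (T x) = α x + θ)
    (β : Y → Z) (hβc : Continuous β)
    (hβ : ∀ y, β (S y) = β y + θ)
    (z₀ : Z)
    (hmin : IsMinimalSubset (T.prodCongr S)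
      ((fun p : X × Y => α p.1 - β p.2) ⁻¹' {z₀})) :
    IsGδ {z : Z | IsMinimalSubset (T.prodCongr S)
        ((fun p : X × Y => α p.1 - β p.2) ⁻¹' {z})} ∧
      Dense {z : Z | IsMinimalSubset (T.prodCongr S)
        ((fun p : X × Y => α p.1 - β p.2) ⁻¹' {z})} := by
  set γ : X × Y → Z := fun p => α p.1 - β p.2
  have hγ : Continuous γ := by fun_prop
  have hγP : γ ∘ T.prodCongr S = γ := funext fun p => by
    simp [γ, hα, hβ, add_sub_add_right_eq_sub]
  refine ⟨isGδ_setOf_isMinimalSubset_preimage_singleton _ hγ hγP, ?_⟩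
  have hshift (n : ℤ) : IsMinimalSubset (T.prodCongr S) (γ ⁻¹' {z₀ + n • θ}) := by
    let φ := (T ^ n).prodCongr (Homeomorph.refl Y)
    have hφγ (p : X × Y) : γ (φ p) = γ p + n • θ := by
      change α ((T ^ n) p.1) - β p.2 = α p.1 - β p.2 + n • θ
      rw [apply_zpow_apply_of_apply_eq_add hα]
      abel
    have hφP : Semiconj φ (T.prodCongr S) (T.prodCongr S) := fun p => by
      change ((T ^ n) (T p.1), S p.2) = (T ((T ^ n) p.1), S p.2)
      rw [← Homeomorph.mul_apply, ← Homeomorph.mul_apply, (Commute.self_zpow T n).eq]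
    rw [← φ.image_preimage_singleton_of_apply_eq_add hφγ]
    exact hmin.image_of_semiconj φ hφP
  have hdense : DenseRange fun n : ℤ => z₀ + n • θ :=
    (add_left_surjective z₀).denseRange.comp hθ (continuous_const_add z₀)
  exact hdense.mono (range_subset_iff.2 hshift)

/-- if some fiber of γ(x,y) = α(x) − β(y) is a minimal set,
then the set of z with minimal fiber is a dense Gδ subset of Z. -/
theorem stmt18 {X Y Z : Type*} [MetricSpace X] [CompactSpace X]
    [MetricSpace Y] [CompactSpace Y]
    [MetricSpace Z] [CompactSpace Z] [AddCommGroup Z] [IsTopologicalAddGroup Z]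
    (T : X ≃ₜ X) (S : Y ≃ₜ Y)
    (hX : IsMinimalSystem T) (hY : IsMinimalSystem S)
    (θ : Z) (hθ : Dense (Set.range fun n : ℤ => n • θ))
    (α : X → Z) (hαc : Continuous α) (hαs : Function.Surjective α)
    (hα : ∀ x, α (T x) = α x + θ)
    (β : Y → Z) (hβc : Continuous β) (hβs : Function.Surjective β)
    (hβ : ∀ y, β (S y) = β y + θ)
    (z₀ : Z)
    (hmin : IsMinimalSubset (T.prodCongr S)
      ((fun p : X × Y => α p.1 - β p.2) ⁻¹' {z₀})) :
    IsGδ {z : Z | IsMinimalSubset (T.prodCongr S)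
        ((fun p : X × Y => α p.1 - β p.2) ⁻¹' {z})} ∧
      Dense {z : Z | IsMinimalSubset (T.prodCongr S)
        ((fun p : X × Y => α p.1 - β p.2) ⁻¹' {z})} :=
  stmt18_general T S θ hθ α hαc hα β hβc hβ z₀ hmin
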